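/- arXiv:1611.06082 — 3 statements merged into one kernel-verified Lean document; each statement's English description precedes it below -/
import Mathlib

section
/- Let L/K be a degree 2 Galois extension with generator σ and Δ = {a·σ(a) : a ∈ L}. If Δ₂ = Δ (sums of two elements of Δ lie in Δ), then for any e ≠ f in L and any a, b in the Δ-convex hull of {e, f}, the Δ-convex hull of {a, b} is contained in the Δ-convex hull of {e, f}. -/
/-! Writing points of the hull of `{e, f}` as `s e + (1 - s) f` and `u e + (1 - u) f`, a point
`t a + (1 - t) b` of the hull of `{a, b}` has parameter `t s + (1 - t) u` with respect to `{e, f}`,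
and its complement `t (1 - s) + (1 - t) (1 - u)` has the same shape. Both lie in `Δ` because `Δ`
is closed under products (norms are multiplicative) and, by hypothesis, under sums. -/

theorem mul_mem_setOf_eq_mul_map {M F : Type*} [CommMonoid M] [FunLike F M M]
    [MulHomClass F M M] (σ : F) {x y : M} (hx : x ∈ {x : M | ∃ a : M, x = a * σ a})
    (hy : y ∈ {x : M | ∃ a : M, x = a * σ a}) : x * y ∈ {x : M | ∃ a : M, x = a * σ a} := by
  obtain ⟨p, rfl⟩ := hx
  obtain ⟨q, rfl⟩ := hy
  exact ⟨p * q, by rw [map_mul, mul_mul_mul_comm]⟩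

section ParamHull

variable {R : Type*} [CommRing R]

def paramHull (S : Set R) (e f : R) : Set R :=
  {x | ∃ t, t ∈ S ∧ 1 - t ∈ S ∧ x = t * e + (1 - t) * f}

theorem paramHull_subset {S : Set R} (hadd : ∀ x ∈ S, ∀ y ∈ S, x + y ∈ S)
    (hmul : ∀ x ∈ S, ∀ y ∈ S, x * y ∈ S) {e f a b : R} (ha : a ∈ paramHull S e f)
    (hb : b ∈ paramHull S e f) : paramHull S a b ⊆ paramHull S e f := by
  obtain ⟨s, hs, hs', rfl⟩ := ha
  obtain ⟨u, hu, hu', rfl⟩ := hb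
  rintro _ ⟨t, ht, ht', rfl⟩
  have hcompl : 1 - (t * s + (1 - t) * u) = t * (1 - s) + (1 - t) * (1 - u) := by ring
  refine ⟨t * s + (1 - t) * u, hadd _ (hmul _ ht _ hs) _ (hmul _ ht' _ hu), ?_, by ring⟩
  rw [hcompl]
  exact hadd _ (hmul _ ht _ hs') _ (hmul _ ht' _ hu')

end ParamHull

theorem stmt9_general (K L : Type*) [Field K] [Field L] [Algebra K L]
    (σ : L ≃ₐ[K] L)
    (Δ : Set L) (hΔ : Δ = {x : L | ∃ a : L, x = a * σ a})
    (hΔ2 : ∀ x ∈ Δ, ∀ y ∈ Δ, x + y ∈ Δ)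
    (hull : L → L → Set L)
    (hhull : ∀ e f : L, hull e f = {x : L | ∃ t : L, t ∈ Δ ∧ (1 - t) ∈ Δ ∧ x = t * e + (1 - t) * f})
    (e f : L)
    (a b : L) (ha : a ∈ hull e f) (hb : b ∈ hull e f) :
    hull a b ⊆ hull e f := by
  have hmul : ∀ x ∈ Δ, ∀ y ∈ Δ, x * y ∈ Δ := by
    subst hΔ
    exact fun x hx y hy => mul_mem_setOf_eq_mul_map σ hx hy
  obtain rfl : hull = paramHull Δ := funext fun e => funext fun f => hhull e f
  exact paramHull_subset hΔ2 hmul ha hb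

/-- Let L/K be a degree 2 Galois extension with generator σ and
Δ = {a·σ(a) : a ∈ L}. If Δ₂ = Δ (sums of two elements of Δ lie in Δ), then for any
e ≠ f in L and any a, b in the Δ-convex hull of {e, f}, the Δ-convex hull of {a, b}
is contained in the Δ-convex hull of {e, f}. -/
theorem stmt9 (K L : Type*) [Field K] [Field L] [Algebra K L]
    [IsGalois K L] (h2 : Module.finrank K L = 2)
    (σ : L ≃ₐ[K] L) (hσ : σ ≠ AlgEquiv.refl)
    (Δ : Set L) (hΔ : Δ = {x : L | ∃ a : L, x = a * σ a})
    (hΔ2 : ∀ x ∈ Δ, ∀ y ∈ Δ, x + y ∈ Δ)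
    (hull : L → L → Set L)
    (hhull : ∀ e f : L, hull e f = {x : L | ∃ t : L, t ∈ Δ ∧ (1 - t) ∈ Δ ∧ x = t * e + (1 - t) * f})
    (e f : L) (hef : e ≠ f)
    (a b : L) (ha : a ∈ hull e f) (hb : b ∈ hull e f) :
    hull a b ⊆ hull e f :=
  stmt9_general K L σ Δ hΔ hΔ2 hull hhull e f a b ha hb
end

section
/- Let L/K be a degree 2 Galois extension with generator σ, form ⟨,⟩ on Lⁿ definite up to n and Δₙ = Δ. Given linearly independent w₁,...,wₘ ∈ Lⁿ, there exists an orthonormal family f₁,...,fₙ (⟨fᵢ,fᵢ⟩ = 1, ⟨fᵢ,fⱼ⟩ = 0 for i ≠ j) such that f₁,...,fₘ span the span of w₁,...,wₘ. -/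
/-!
Gram–Schmidt for the hermitian form `⟨u, v⟩ = ∑ σ(uᵢ) vᵢ`. For an orthonormal family `f` and a
vector `x` outside its span, `v = x - ∑ ⟨fᵢ, x⟩ fᵢ` is nonzero and orthogonal to every `fᵢ`.
Definiteness makes `⟨v, v⟩` nonzero and `Δₙ = Δ` writes it as `a σ(a)`, so `a⁻¹ v` has norm `1`.
Orthonormalize `w₁, …, wₘ` this way, then keep adding vectors outside the span, which exist for
dimension reasons while fewer than `n` vectors have been chosen.
-/

open Submodule Set

theorem involutive_of_finrank_eq_two {K L : Type*} [Field K] [Field L] [Algebra K L]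
    [IsGalois K L] (h2 : Module.finrank K L = 2) (σ : L ≃ₐ[K] L) : Function.Involutive σ := by
  have : FiniteDimensional K L := Module.finite_of_finrank_eq_succ h2
  have hsq : σ ^ 2 = 1 := by
    rw [← h2, ← IsGalois.card_aut_eq_finrank]
    exact pow_card_eq_one'
  exact fun x => by simpa [sq] using DFunLike.congr_fun hsq x

section HermForm

variable {L ι κ : Type*} [Field L] [Fintype ι] (σ : L →+* L)

def hermForm (u v : ι → L) : L := ∑ i, σ (u i) * v i

variable {σ}

theorem hermForm_smul_left (c : L) (u v : ι → L) :
    hermForm σ (c • u) v = σ c * hermForm σ u v := by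
  simp [hermForm, Finset.mul_sum, mul_assoc]

theorem hermForm_smul_right (c : L) (u v : ι → L) :
    hermForm σ u (c • v) = c * hermForm σ u v := by
  simp only [hermForm, Pi.smul_apply, smul_eq_mul, Finset.mul_sum]
  exact Finset.sum_congr rfl fun _ _ => by ring

theorem hermForm_sub_right (u v w : ι → L) :
    hermForm σ u (v - w) = hermForm σ u v - hermForm σ u w := by
  simp [hermForm, mul_sub, Finset.sum_sub_distrib]

theorem hermForm_sum_right (s : Finset κ) (u : ι → L) (v : κ → ι → L) :
    hermForm σ u (∑ j ∈ s, v j) = ∑ j ∈ s, hermForm σ u (v j) := by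
  simp only [hermForm, Finset.sum_apply, Finset.mul_sum]
  exact Finset.sum_comm

theorem map_hermForm (hσ : Function.Involutive σ) (u v : ι → L) :
    σ (hermForm σ u v) = hermForm σ v u := by
  simp only [hermForm, map_sum, map_mul, hσ _]
  exact Finset.sum_congr rfl fun _ _ => mul_comm _ _

theorem exists_hermForm_smul_self_eq_one {u : ι → L} (hu : hermForm σ u u ≠ 0)
    (hnorm : ∃ a, hermForm σ u u = a * σ a) :
    ∃ c : L, c ≠ 0 ∧ hermForm σ (c • u) (c • u) = 1 := by
  obtain ⟨a, ha⟩ := hnorm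
  have ha0 : a ≠ 0 := by rintro rfl; exact hu (by simpa using ha)
  have hσa : σ a ≠ 0 := (map_ne_zero σ).2 ha0
  refine ⟨a⁻¹, inv_ne_zero ha0, ?_⟩
  rw [hermForm_smul_left, hermForm_smul_right, ha, map_inv₀]
  field_simp

variable (σ) in
def HermOrthonormal (f : κ → ι → L) : Prop :=
  (∀ i, hermForm σ (f i) (f i) = 1) ∧ Pairwise fun i j => hermForm σ (f i) (f j) = 0

theorem HermOrthonormal.hermForm_sub_sum_eq_zero [Fintype κ]
    {f : κ → ι → L} (hf : HermOrthonormal σ f) (x : ι → L) (j : κ) :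
    hermForm σ (f j) (x - ∑ i, hermForm σ (f i) x • f i) = 0 := by
  rw [hermForm_sub_right, hermForm_sum_right, Finset.sum_eq_single j, hermForm_smul_right,
    hf.1 j, mul_one, sub_self]
  · intro i _ hij
    rw [hermForm_smul_right, hf.2 hij.symm, mul_zero]
  · simp

theorem HermOrthonormal.snoc (hσ : Function.Involutive σ) {k : ℕ} {f : Fin k → ι → L}
    (hf : HermOrthonormal σ f) {y : ι → L} (hy : hermForm σ y y = 1)
    (hfy : ∀ i, hermForm σ (f i) y = 0) : HermOrthonormal σ (Fin.snoc f y) := by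
  have hyf : ∀ i, hermForm σ y (f i) = 0 := fun i => by
    rw [← map_hermForm hσ, hfy, map_zero]
  refine ⟨fun i => ?_, fun i j hij => ?_⟩
  · cases i using Fin.lastCases <;> simp [hy, hf.1]
  · cases i using Fin.lastCases <;> cases j using Fin.lastCases
    · exact absurd rfl hij
    · simp [hyf]
    · simp [hfy]
    · simpa using hf.2 (fun h => hij (congrArg Fin.castSucc h))

end HermForm

theorem span_insert_smul_sub_eq {L V : Type*} [Field L] [AddCommGroup V] [Module L V] {c : L}
    (hc : c ≠ 0) {x s : V} {S : Set V} (hs : s ∈ span L S) :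
    span L (insert (c • (x - s)) S) = span L (insert x S) := by
  have hS (v : V) : S ⊆ span L (insert v S) := subset_span.trans (span_mono (subset_insert _ _))
  apply le_antisymm <;> rw [span_le, insert_subset_iff] <;> refine ⟨?_, hS _⟩
  · exact smul_mem _ _ (sub_mem (subset_span (mem_insert _ _)) (span_mono (subset_insert _ _) hs))
  · rw [SetLike.mem_coe]
    convert add_mem (smul_mem _ c⁻¹ (subset_span (mem_insert (c • (x - s)) S)))
      (span_mono (subset_insert _ _) hs) using 1
    rw [inv_smul_smul₀ hc, sub_add_cancel]

section GramSchmidt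

variable {L ι : Type*} [Field L] [Fintype ι] {σ : L →+* L} (hσ : Function.Involutive σ)
  (hdef : ∀ u : ι → L, u ≠ 0 → hermForm σ u u ≠ 0)
  (hΔ : ∀ u : ι → L, ∃ a, hermForm σ u u = a * σ a)
include hσ hdef hΔ

theorem HermOrthonormal.exists_snoc {k : ℕ} {f : Fin k → ι → L} (hf : HermOrthonormal σ f)
    {x : ι → L} (hx : x ∉ span L (range f)) :
    ∃ y, HermOrthonormal σ (Fin.snoc f y) ∧
      span L (insert y (range f)) = span L (insert x (range f)) := by
  let p := ∑ i, hermForm σ (f i) x • f i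
  have hp : p ∈ span L (range f) := sum_mem fun i _ => smul_mem _ _ (subset_span ⟨i, rfl⟩)
  have hv : x - p ≠ 0 := fun h => hx (sub_eq_zero.1 h ▸ hp)
  obtain ⟨c, hc, hcv⟩ := exists_hermForm_smul_self_eq_one (hdef _ hv) (hΔ _)
  refine ⟨c • (x - p), hf.snoc hσ hcv fun i => ?_, span_insert_smul_sub_eq hc hp⟩
  rw [hermForm_smul_right, hf.hermForm_sub_sum_eq_zero, mul_zero]

theorem exists_hermOrthonormal_span_eq {m : ℕ} (w : Fin m → ι → L)
    (hw : LinearIndependent L w) :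
    ∃ f : Fin m → ι → L, HermOrthonormal σ f ∧ span L (range f) = span L (range w) := by
  induction m with
  | zero => exact ⟨w, ⟨fun i => i.elim0, fun i => i.elim0⟩, rfl⟩
  | succ m ih =>
    rw [← Fin.snoc_init_self w] at hw ⊢
    obtain ⟨hinit, hlast⟩ := linearIndependent_finSnoc.1 hw
    obtain ⟨f, hf, hspan⟩ := ih _ hinit
    obtain ⟨y, hy, hyspan⟩ := hf.exists_snoc hσ hdef hΔ (hspan ▸ hlast)
    refine ⟨Fin.snoc f y, hy, ?_⟩
    rw [Fin.range_snoc, Fin.range_snoc, hyspan, span_insert, span_insert, hspan]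

theorem HermOrthonormal.exists_extend {m k : ℕ} (hmk : m ≤ k) (hk : k ≤ Fintype.card ι)
    {f : Fin m → ι → L} (hf : HermOrthonormal σ f) :
    ∃ F : Fin k → ι → L, HermOrthonormal σ F ∧ ∀ i, F (Fin.castLE hmk i) = f i := by
  induction k, hmk using Nat.le_induction with
  | base => exact ⟨f, hf, fun _ => rfl⟩
  | succ k hmk ih =>
    obtain ⟨F, hF, hFf⟩ := ih (Nat.le_of_succ_le hk)
    have hlt : span L (range F) < ⊤ := by
      refine lt_top_of_finrank_lt_finrank ((finrank_range_le_card F).trans_lt ?_)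
      simpa using hk
    obtain ⟨x, -, hx⟩ := SetLike.exists_of_lt hlt
    obtain ⟨y, hy, -⟩ := hF.exists_snoc hσ hdef hΔ hx
    refine ⟨Fin.snoc F y, hy, fun i => ?_⟩
    rw [show Fin.castLE (hmk.trans k.le_succ) i = (Fin.castLE hmk i).castSucc from rfl,
      Fin.snoc_castSucc, hFf]

end GramSchmidt

theorem stmt11_general (K L : Type*) [Field K] [Field L] [Algebra K L]
    [IsGalois K L] (h2 : Module.finrank K L = 2)
    (σ : L ≃ₐ[K] L)
    (n m : ℕ) (hmn : m ≤ n)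
    (hdef : ∀ u : Fin n → L, u ≠ 0 → ∑ i, σ (u i) * u i ≠ 0)
    (hΔ : ∀ u : Fin n → L, ∃ a : L, ∑ i, σ (u i) * u i = a * σ a)
    (w : Fin m → (Fin n → L)) (hw : LinearIndependent L w) :
    ∃ f : Fin n → (Fin n → L),
      (∀ i, ∑ k, σ (f i k) * f i k = 1) ∧
      (∀ i j, i ≠ j → ∑ k, σ (f i k) * f j k = 0) ∧
      Submodule.span L (Set.range (fun i : Fin m => f (Fin.castLE hmn i)))
        = Submodule.span L (Set.range w) := by
  have hσ : Function.Involutive (σ : L →+* L) := involutive_of_finrank_eq_two h2 σ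
  obtain ⟨f, hf, hspan⟩ := exists_hermOrthonormal_span_eq hσ hdef hΔ w hw
  obtain ⟨F, hF, hFf⟩ := hf.exists_extend hσ hdef hΔ hmn (by simp)
  refine ⟨F, hF.1, hF.2, ?_⟩
  simp only [hFf, ← hspan]

/-- Orthonormalization. Let L/K be a degree 2 Galois extension with
generator σ, the form ⟨,⟩ on Lⁿ definite up to n, and Δₙ = Δ (every ⟨u,u⟩ is of the
form a·σ(a)). Given linearly independent w₁,...,wₘ ∈ Lⁿ (m ≤ n), there exists an
orthonormal family f₁,...,fₙ such that f₁,...,fₘ span the span of w₁,...,wₘ. -/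
theorem stmt11 (K L : Type*) [Field K] [Field L] [Algebra K L]
    [IsGalois K L] (h2 : Module.finrank K L = 2)
    (σ : L ≃ₐ[K] L) (hσ : σ ≠ AlgEquiv.refl)
    (n m : ℕ) (hmn : m ≤ n)
    (hdef : ∀ u : Fin n → L, u ≠ 0 → ∑ i, σ (u i) * u i ≠ 0)
    (hΔ : ∀ u : Fin n → L, ∃ a : L, ∑ i, σ (u i) * u i = a * σ a)
    (w : Fin m → (Fin n → L)) (hw : LinearIndependent L w) :
    ∃ f : Fin n → (Fin n → L),
      (∀ i, ∑ k, σ (f i k) * f i k = 1) ∧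
      (∀ i j, i ≠ j → ∑ k, σ (f i k) * f j k = 0) ∧
      Submodule.span L (Set.range (fun i : Fin m => f (Fin.castLE hmn i)))
        = Submodule.span L (Set.range w) :=
  stmt11_general K L h2 σ n m hmn hdef hΔ w hw
end

section
/- Let L/K be a degree 2 Galois extension with generator σ, with ⟨,⟩ definite up to n. Let M ∈ Mₙ(L) have eigenvalues a ≠ b in L with eigenvectors u, v ∈ Lⁿ satisfying ⟨u,u⟩ ∈ Δ \ {0}, ⟨v,v⟩ ∈ Δ \ {0}, and ⟨u,v⟩ = 0. Then {t·a + (1−t)·b : t ∈ Δ ∩ (1−Δ)} ⊆ Num(M). -/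
open Matrix

/-!
If `⟨u,u⟩ = e σ(e)` and `⟨v,v⟩ = f σ(f)` are nonzero, then `u' = e⁻¹ u` and `v' = f⁻¹ v` are unit
eigenvectors. For `t = s σ(s)` and `1 - t = r σ(r)` the vector `w = s u' + r v'` then satisfies
`⟨w,w⟩ = t + (1 - t) = 1` and `⟨w,Mw⟩ = t a + (1 - t) b`: the cross terms vanish because
`⟨u,v⟩ = 0` and `⟨v,u⟩ = σ⟨u,v⟩ = 0`, as every automorphism of a quadratic extension is an
involution.
-/

theorem AlgEquiv.apply_apply_of_finrank_eq_two {K L : Type*} [Field K] [Field L] [Algebra K L]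
    (h2 : Module.finrank K L = 2) (σ : L ≃ₐ[K] L) (x : L) : σ (σ x) = x := by
  have : FiniteDimensional K L := .of_finrank_pos (by omega)
  have hord : orderOf σ ∣ 2 := by
    have hle : orderOf σ ≤ 2 := orderOf_le_card_univ.trans (h2 ▸ AlgEquiv.card_le)
    have hpos : 0 < orderOf σ := orderOf_pos σ
    exact (Nat.dvd_prime Nat.prime_two).mpr (by omega)
  have hsq : σ * σ = 1 := by rw [← sq]; exact orderOf_dvd_iff_pow_eq_one.mp hord
  simpa only [AlgEquiv.mul_apply, AlgEquiv.one_apply] using DFunLike.congr_fun hsq x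

section Sesquilinear

variable {R F ι : Type*} [Fintype ι]

section CommSemiring

variable [CommSemiring R] [FunLike F R R] [RingHomClass F R R] (σ : F)

theorem sum_map_smul_mul_smul (α β : R) (u v : ι → R) :
    ∑ i, σ ((α • u) i) * (β • v) i = σ α * β * ∑ i, σ (u i) * v i := by
  simp only [Pi.smul_apply, smul_eq_mul, map_mul, Finset.mul_sum]
  exact Finset.sum_congr rfl fun i _ ↦ by ring

theorem map_sum_map_mul {σ : F} (hσ : ∀ x, σ (σ x) = x) (u v : ι → R) :
    σ (∑ i, σ (u i) * v i) = ∑ i, σ (v i) * u i := by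
  simp only [map_sum, map_mul, hσ, mul_comm]

theorem sum_map_mul_smul_add_smul_of_orthogonal {u v : ι → R}
    (huv : ∑ i, σ (u i) * v i = 0) (hvu : ∑ i, σ (v i) * u i = 0) (α β γ δ : R) :
    ∑ i, σ ((α • u + β • v) i) * (γ • u + δ • v) i =
      σ α * γ * ∑ i, σ (u i) * u i + σ β * δ * ∑ i, σ (v i) * v i := by
  have hexpand : ∑ i, σ ((α • u + β • v) i) * (γ • u + δ • v) i =
      ∑ i, σ ((α • u) i) * (γ • u) i + ∑ i, σ ((α • u) i) * (δ • v) i +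
        ∑ i, σ ((β • v) i) * (γ • u) i + ∑ i, σ ((β • v) i) * (δ • v) i := by
    simp only [Pi.add_apply, map_add, add_mul, mul_add, Finset.sum_add_distrib]
    ring
  simp only [hexpand, sum_map_smul_mul_smul, huv, hvu, mul_zero, add_zero]

end CommSemiring

theorem sum_map_mul_inv_smul_eq_one [Field R] [FunLike F R R] [RingHomClass F R R] (σ : F)
    {u : ι → R} {e : R} (he : ∑ i, σ (u i) * u i = e * σ e)
    (h0 : ∑ i, σ (u i) * u i ≠ 0) :
    ∑ i, σ ((e⁻¹ • u) i) * (e⁻¹ • u) i = 1 := by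
  rw [he] at h0
  rw [sum_map_smul_mul_smul, he, map_inv₀, ← mul_inv, mul_comm (σ e)]
  exact inv_mul_cancel₀ h0

end Sesquilinear

theorem Matrix.mulVec_smul_of_mulVec_eq_smul {R ι : Type*} [CommSemiring R] [Fintype ι]
    {M : Matrix ι ι R} {a : R} {u : ι → R} (hMu : M *ᵥ u = a • u) (c : R) :
    M *ᵥ (c • u) = a • c • u := by
  rw [mulVec_smul, hMu, smul_comm]

theorem stmt12_general (K L : Type*) [Field K] [Field L] [Algebra K L]
    (h2 : Module.finrank K L = 2)
    (σ : L ≃ₐ[K] L)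
    (n : ℕ)
    (M : Matrix (Fin n) (Fin n) L)
    (a b : L)
    (u v : Fin n → L)
    (hMu : M.mulVec u = a • u) (hMv : M.mulVec v = b • v)
    (hu : ∃ e : L, ∑ i, σ (u i) * u i = e * σ e) (hu0 : ∑ i, σ (u i) * u i ≠ 0)
    (hv : ∃ e : L, ∑ i, σ (v i) * v i = e * σ e) (hv0 : ∑ i, σ (v i) * v i ≠ 0)
    (horth : ∑ i, σ (u i) * v i = 0) :
    ∀ t : L, (∃ e : L, t = e * σ e) → (∃ e : L, 1 - t = e * σ e) →
      ∃ w : Fin n → L, (∑ i, σ (w i) * w i = 1) ∧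
        ∑ i, σ (w i) * M.mulVec w i = t * a + (1 - t) * b := by
  rintro t ⟨s, rfl⟩ ⟨r, hr⟩
  obtain ⟨e, he⟩ := hu
  obtain ⟨f, hf⟩ := hv
  have hvu : ∑ i, σ (v i) * u i = 0 := by
    rw [← map_sum_map_mul (σ.apply_apply_of_finrank_eq_two h2), horth, map_zero]
  have huv' : ∑ i, σ ((e⁻¹ • u) i) * (f⁻¹ • v) i = 0 := by
    rw [sum_map_smul_mul_smul, horth, mul_zero]
  have hvu' : ∑ i, σ ((f⁻¹ • v) i) * (e⁻¹ • u) i = 0 := by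
    rw [sum_map_smul_mul_smul, hvu, mul_zero]
  refine ⟨s • e⁻¹ • u + r • f⁻¹ • v, ?_, ?_⟩
  · rw [sum_map_mul_smul_add_smul_of_orthogonal σ huv' hvu',
      sum_map_mul_inv_smul_eq_one σ he hu0, sum_map_mul_inv_smul_eq_one σ hf hv0]
    linear_combination -hr
  · rw [mulVec_add, mulVec_smul_of_mulVec_eq_smul (mulVec_smul_of_mulVec_eq_smul hMu _),
      mulVec_smul_of_mulVec_eq_smul (mulVec_smul_of_mulVec_eq_smul hMv _), smul_smul a,
      smul_smul b, sum_map_mul_smul_add_smul_of_orthogonal σ huv' hvu',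
      sum_map_mul_inv_smul_eq_one σ he hu0, sum_map_mul_inv_smul_eq_one σ hf hv0]
    linear_combination -b * hr

/-- Theorem (part a). L/K degree 2 Galois with generator σ, form ⟨,⟩
definite up to n. Let M ∈ Mₙ(L) have eigenvalues a ≠ b in L with eigenvectors u, v
satisfying ⟨u,u⟩ ∈ Δ \ {0}, ⟨v,v⟩ ∈ Δ \ {0}, and ⟨u,v⟩ = 0. Then
{t·a + (1−t)·b : t ∈ Δ ∩ (1−Δ)} ⊆ Num(M). -/
theorem stmt12 (K L : Type*) [Field K] [Field L] [Algebra K L]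
    [IsGalois K L] (h2 : Module.finrank K L = 2)
    (σ : L ≃ₐ[K] L) (hσ : σ ≠ AlgEquiv.refl)
    (n : ℕ)
    (hdef : ∀ w : Fin n → L, w ≠ 0 → ∑ i, σ (w i) * w i ≠ 0)
    (M : Matrix (Fin n) (Fin n) L)
    (a b : L) (hab : a ≠ b)
    (u v : Fin n → L)
    (hMu : M.mulVec u = a • u) (hMv : M.mulVec v = b • v)
    (hu : ∃ e : L, ∑ i, σ (u i) * u i = e * σ e) (hu0 : ∑ i, σ (u i) * u i ≠ 0)
    (hv : ∃ e : L, ∑ i, σ (v i) * v i = e * σ e) (hv0 : ∑ i, σ (v i) * v i ≠ 0)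
    (horth : ∑ i, σ (u i) * v i = 0) :
    ∀ t : L, (∃ e : L, t = e * σ e) → (∃ e : L, 1 - t = e * σ e) →
      ∃ w : Fin n → L, (∑ i, σ (w i) * w i = 1) ∧
        ∑ i, σ (w i) * M.mulVec w i = t * a + (1 - t) * b :=
  stmt12_general K L h2 σ n M a b u v hMu hMv hu hu0 hv hv0 horth
end
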